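/- arXiv:1105.4206 — 6 statements merged into one kernel-verified Lean document; each statement's English description precedes it below -/
import Mathlib

section
/- For every real α > 0 and every positive integer M, ∫₀^∞ log₂(1 + α·x) · x^(M−1) e^(−x) / (M−1)! dx = log₂(e) · e^(1/α) · Σ_{k=0}^{M−1} Γ(−k, 1/α) / α^k, where Γ(s, y) = ∫_y^∞ t^(s−1) e^(−t) dt is the upper incomplete Gamma function. (This is the closed form R⁽¹⁾(α, M) = E[log₂(1+X)] for X = α·Z with Z having the Gamma(M,1) density, i.e., the paper's convention for a χ²_{2M} variable.) -/
/-!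
Let `Q_m(x) = e^{-x} ∑_{k ≤ m} x^k / k!` be the tail of the Gamma(m + 1, 1) law, so that
`Q_m' = -f_m` for its density `f_m`. Integrating by parts against `log (1 + α x)` turns the
integral into
`∫₀^∞ α / (1 + α x) Q_m(x) dx = ∑_{k ≤ m} (1 / k!) ∫₀^∞ x^k e^{-x} / (x + 1/α) dx`.
The splitting `x^{k+1} / (x + y) = x^k - y x^k / (x + y)` gives a recursion in `k` for these
integrals which is the recursion `Γ(s + 1, y) = s Γ(s, y) + y^s e^{-y}` at `s = -(k + 1)`,
and for `k = 0` the substitution `t = x + y` identifies the integral with `e^y Γ(0, y)`.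
-/

open Real MeasureTheory Finset

noncomputable def upperIncompleteGamma (s y : ℝ) : ℝ :=
  ∫ t in Set.Ioi y, t ^ (s - 1) * Real.exp (-t)

open Set Filter Topology
open scoped Nat

lemma setIntegral_Ioi_zero_comp_add_right (f : ℝ → ℝ) (c : ℝ) :
    ∫ x in Ioi 0, f (x + c) = ∫ u in Ioi c, f u := by
  rw [← integral_indicator measurableSet_Ioi, ← integral_indicator measurableSet_Ioi]
  conv_rhs => rw [← integral_add_right_eq_self _ c]
  simp [indicator_apply]

lemma integrableOn_pow_mul_exp_neg_Ioi (n : ℕ) :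
    IntegrableOn (fun x : ℝ => x ^ n * exp (-x)) (Ioi 0) := by
  refine (GammaIntegral_convergent (s := n + 1) (by positivity)).congr_fun
    (fun x _ => ?_) measurableSet_Ioi
  simp [mul_comm]

lemma integral_pow_mul_exp_neg_Ioi (n : ℕ) :
    ∫ x in Ioi (0 : ℝ), x ^ n * exp (-x) = n ! := by
  rw [← Gamma_nat_eq_factorial, Gamma_eq_integral (by positivity)]
  simp [mul_comm]

lemma integrableOn_rpow_mul_exp_neg_Ioi {y : ℝ} (hy : 0 < y) (s : ℝ) :
    IntegrableOn (fun t : ℝ => t ^ s * exp (-t)) (Ioi y) := by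
  rcases le_or_gt s 0 with hs | hs
  · refine ((exp_neg_integrableOn_Ioi y one_pos).const_mul (y ^ s)).mono' ?_ ?_
    · exact ((continuousOn_id.rpow_const fun t ht => Or.inl (hy.trans ht).ne').mul
        (continuous_exp.comp continuous_neg).continuousOn).aestronglyMeasurable measurableSet_Ioi
    · filter_upwards [ae_restrict_mem measurableSet_Ioi] with t (ht : y < t)
      have ht₀ : 0 < t := hy.trans ht
      rw [norm_of_nonneg (by positivity), neg_one_mul]
      exact mul_le_mul_of_nonneg_right (rpow_le_rpow_of_nonpos hy ht.le hs) (exp_pos _).le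
  · have := integrableOn_rpow_mul_exp_neg_rpow (p := 1) (by linarith) one_pos
    simpa using this.mono_set (Ioi_subset_Ioi hy.le)

lemma upperIncompleteGamma_add_one {y : ℝ} (hy : 0 < y) (s : ℝ) :
    upperIncompleteGamma (s + 1) y = s * upperIncompleteGamma s y + y ^ s * exp (-y) := by
  have hderiv : ∀ t ∈ Ici y, HasDerivAt (fun t => t ^ s * exp (-t))
      (s * (t ^ (s - 1) * exp (-t)) - t ^ s * exp (-t)) t := fun t ht => by
    have hpow := hasDerivAt_rpow_const (p := s) (Or.inl (hy.trans_le ht).ne')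
    exact (hpow.mul (hasDerivAt_neg t).exp).congr_deriv (by ring)
  have hint₁ := (integrableOn_rpow_mul_exp_neg_Ioi hy (s - 1)).const_mul s
  have hint₂ := integrableOn_rpow_mul_exp_neg_Ioi hy s
  have hftc := integral_Ioi_of_hasDerivAt_of_tendsto' hderiv (hint₁.sub hint₂)
    (by simpa using tendsto_rpow_mul_exp_neg_mul_atTop_nhds_zero s 1 one_pos)
  rw [integral_sub hint₁ hint₂, integral_const_mul] at hftc
  simp only [upperIncompleteGamma, add_sub_cancel_right]
  linarith

lemma integrableOn_pow_mul_exp_neg_div_add {y : ℝ} (hy : 0 < y) (k : ℕ) :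
    IntegrableOn (fun x : ℝ => x ^ k * exp (-x) / (x + y)) (Ioi 0) := by
  refine ((integrableOn_pow_mul_exp_neg_Ioi k).div_const y).mono' ?_ ?_
  · exact (ContinuousOn.div (by fun_prop) (by fun_prop) fun x (hx : 0 < x) => by positivity)
      |>.aestronglyMeasurable measurableSet_Ioi
  · filter_upwards [ae_restrict_mem measurableSet_Ioi] with x (hx : 0 < x)
    rw [norm_of_nonneg (by positivity)]
    gcongr
    linarith

lemma integral_pow_mul_exp_neg_div_add {y : ℝ} (hy : 0 < y) (k : ℕ) :
    ∫ x in Ioi 0, x ^ k * exp (-x) / (x + y) =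
      exp y * k ! * y ^ k * upperIncompleteGamma (-k) y := by
  induction k with
  | zero =>
    simp only [upperIncompleteGamma, CharP.cast_eq_zero, neg_zero, zero_sub, rpow_neg_one,
      pow_zero, one_mul, Nat.factorial_zero, Nat.cast_one, mul_one]
    rw [← setIntegral_Ioi_zero_comp_add_right (fun t => t⁻¹ * exp (-t)) y,
      ← integral_const_mul]
    congr 1 with x
    rw [neg_add, exp_add, exp_neg y]
    field_simp
  | succ k ih =>
    have hsplit : ∀ x ∈ Ioi (0 : ℝ), x ^ (k + 1) * exp (-x) / (x + y) =
        x ^ k * exp (-x) - y * (x ^ k * exp (-x) / (x + y)) := fun x (hx : 0 < x) => by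
      field_simp
      ring
    rw [setIntegral_congr_fun measurableSet_Ioi hsplit,
      integral_sub (integrableOn_pow_mul_exp_neg_Ioi k)
        ((integrableOn_pow_mul_exp_neg_div_add hy k).const_mul y),
      integral_const_mul, ih, integral_pow_mul_exp_neg_Ioi]
    have hrec := upperIncompleteGamma_add_one hy (-(k + 1))
    rw [show -((k : ℝ) + 1) + 1 = -k by ring] at hrec
    have hcancel : y ^ (k + 1) * y ^ (-((k : ℝ) + 1)) * (exp y * exp (-y)) = 1 := by
      rw [← rpow_natCast, ← rpow_add hy, ← exp_add]
      push_cast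
      simp
    push_cast [Nat.factorial_succ]
    linear_combination -(exp y * k ! * y ^ (k + 1)) * hrec - k ! * hcancel

/-- `erlangDensity k` is the Gamma(k + 1, 1) density, and `erlangTail m x = P(X > x)` for
`X ∼ Gamma(m + 1, 1)`. -/
noncomputable def erlangDensity (k : ℕ) (x : ℝ) : ℝ := x ^ k * exp (-x) / k !

noncomputable def erlangTail (m : ℕ) (x : ℝ) : ℝ := ∑ k ∈ range (m + 1), erlangDensity k x

lemma continuous_erlangDensity (k : ℕ) : Continuous (erlangDensity k) := by
  unfold erlangDensity
  fun_prop

lemma erlangDensity_nonneg (k : ℕ) {x : ℝ} (hx : 0 ≤ x) : 0 ≤ erlangDensity k x := by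
  unfold erlangDensity
  positivity

lemma erlangTail_nonneg (m : ℕ) {x : ℝ} (hx : 0 ≤ x) : 0 ≤ erlangTail m x :=
  sum_nonneg fun k _ => erlangDensity_nonneg k hx

lemma mul_erlangDensity (k : ℕ) (x : ℝ) :
    x * erlangDensity k x = (k + 1) * erlangDensity (k + 1) x := by
  simp only [erlangDensity, Nat.factorial_succ, Nat.cast_mul, Nat.cast_succ]
  field_simp
  ring

lemma hasDerivAt_erlangDensity_succ (k : ℕ) (x : ℝ) :
    HasDerivAt (erlangDensity (k + 1)) (erlangDensity k x - erlangDensity (k + 1) x) x := by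
  have h := ((hasDerivAt_pow (k + 1) x).mul (hasDerivAt_neg x).exp).div_const ((k + 1)! : ℝ)
  refine h.congr_deriv ?_
  simp only [erlangDensity, Nat.factorial_succ, Nat.cast_mul, Nat.cast_succ, Nat.add_sub_cancel]
  field_simp
  ring

lemma hasDerivAt_erlangTail (m : ℕ) (x : ℝ) :
    HasDerivAt (erlangTail m) (-erlangDensity m x) x := by
  induction m with
  | zero =>
    have h : erlangTail 0 = fun x => exp (-x) := funext fun x => by
      simp [erlangTail, erlangDensity]
    rw [h]
    simpa [erlangDensity] using (hasDerivAt_neg x).exp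
  | succ m ih =>
    have h : erlangTail (m + 1) = erlangTail m + erlangDensity (m + 1) :=
      funext fun x => sum_range_succ _ _
    rw [h]
    exact (ih.add (hasDerivAt_erlangDensity_succ m x)).congr_deriv (by ring)

lemma integrableOn_erlangDensity (k : ℕ) : IntegrableOn (erlangDensity k) (Ioi 0) :=
  (integrableOn_pow_mul_exp_neg_Ioi k).div_const _

lemma integrableOn_erlangTail (m : ℕ) : IntegrableOn (erlangTail m) (Ioi 0) := by
  unfold erlangTail
  exact integrable_finsetSum _ fun k _ => integrableOn_erlangDensity k

lemma tendsto_erlangDensity_atTop (k : ℕ) : Tendsto (erlangDensity k) atTop (𝓝 0) := by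
  have h := (tendsto_pow_mul_exp_neg_atTop_nhds_zero k).div_const (k ! : ℝ)
  rwa [zero_div] at h

lemma log_one_add_mul_mul_erlangDensity_le {α x : ℝ} (hα : 0 < α) (hx : 0 ≤ x) (k : ℕ) :
    log (1 + α * x) * erlangDensity k x ≤ α * (k + 1) * erlangDensity (k + 1) x := by
  have hlog : log (1 + α * x) ≤ α * x := by
    linarith [log_le_sub_one_of_pos (by positivity : 0 < 1 + α * x)]
  calc log (1 + α * x) * erlangDensity k x ≤ α * x * erlangDensity k x :=
        mul_le_mul_of_nonneg_right hlog (erlangDensity_nonneg k hx)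
    _ = α * (k + 1) * erlangDensity (k + 1) x := by rw [mul_assoc, mul_erlangDensity, mul_assoc]

section

variable {α : ℝ} (hα : 0 < α)
include hα

lemma integrableOn_log_one_add_mul_mul_erlangDensity (m : ℕ) :
    IntegrableOn (fun x => log (1 + α * x) * erlangDensity m x) (Ioi 0) := by
  refine ((integrableOn_erlangDensity (m + 1)).const_mul (α * (m + 1))).mono' ?_ ?_
  · exact ((measurable_log.comp (by fun_prop)).mul
      (continuous_erlangDensity m).measurable).aestronglyMeasurable
  · filter_upwards [ae_restrict_mem measurableSet_Ioi] with x (hx : 0 < x)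
    rw [norm_of_nonneg (mul_nonneg (log_nonneg (by nlinarith)) (erlangDensity_nonneg m hx.le))]
    exact log_one_add_mul_mul_erlangDensity_le hα hx.le m

lemma integrableOn_div_one_add_mul_mul_erlangTail (m : ℕ) :
    IntegrableOn (fun x => α / (1 + α * x) * erlangTail m x) (Ioi 0) := by
  have hcont : Continuous (erlangTail m) :=
    continuous_finsetSum _ fun k _ => continuous_erlangDensity k
  refine ((integrableOn_erlangTail m).const_mul α).mono' ?_ ?_
  · exact ((measurable_const.div (by fun_prop)).mul hcont.measurable).aestronglyMeasurable
  · filter_upwards [ae_restrict_mem measurableSet_Ioi] with x (hx : 0 < x)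
    rw [norm_of_nonneg (mul_nonneg (by positivity) (erlangTail_nonneg m hx.le))]
    exact mul_le_mul_of_nonneg_right (div_le_self hα.le (by nlinarith))
      (erlangTail_nonneg m hx.le)

lemma tendsto_log_one_add_mul_mul_erlangTail (m : ℕ) :
    Tendsto (fun x => log (1 + α * x) * erlangTail m x) atTop (𝓝 0) := by
  have hlim : Tendsto (fun x => ∑ k ∈ range (m + 1), α * (k + 1) * erlangDensity (k + 1) x)
      atTop (𝓝 0) := by
    simpa using tendsto_finsetSum _ fun k _ =>
      (tendsto_erlangDensity_atTop (k + 1)).const_mul (α * (k + 1))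
  refine squeeze_zero' ?_ ?_ hlim
  · filter_upwards [eventually_ge_atTop 0] with x hx
    exact mul_nonneg (log_nonneg (by nlinarith)) (erlangTail_nonneg m hx)
  · filter_upwards [eventually_ge_atTop 0] with x hx
    rw [erlangTail, mul_sum]
    exact sum_le_sum fun k _ => log_one_add_mul_mul_erlangDensity_le hα hx k

lemma integral_log_one_add_mul_mul_erlangDensity (m : ℕ) :
    ∫ x in Ioi 0, log (1 + α * x) * erlangDensity m x =
      ∫ x in Ioi 0, α / (1 + α * x) * erlangTail m x := by
  have hderiv : ∀ x ∈ Ici (0 : ℝ), HasDerivAt (fun x => log (1 + α * x) * erlangTail m x)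
      (α / (1 + α * x) * erlangTail m x - log (1 + α * x) * erlangDensity m x) x :=
    fun x (hx : 0 ≤ x) => by
      have hlog := (((hasDerivAt_id x).const_mul α).const_add 1).log (by dsimp; positivity)
      refine (hlog.mul (hasDerivAt_erlangTail m x)).congr_deriv ?_
      simp only [id, mul_one]
      ring
  have hftc := integral_Ioi_of_hasDerivAt_of_tendsto' hderiv
    ((integrableOn_div_one_add_mul_mul_erlangTail hα m).sub
      (integrableOn_log_one_add_mul_mul_erlangDensity hα m))
    (tendsto_log_one_add_mul_mul_erlangTail hα m)
  rw [integral_sub (integrableOn_div_one_add_mul_mul_erlangTail hα m)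
    (integrableOn_log_one_add_mul_mul_erlangDensity hα m)] at hftc
  simp only [mul_zero, add_zero, log_one, zero_mul, sub_zero] at hftc
  linarith

lemma integral_div_one_add_mul_mul_erlangTail (m : ℕ) :
    ∫ x in Ioi 0, α / (1 + α * x) * erlangTail m x =
      exp (1 / α) * ∑ k ∈ range (m + 1), upperIncompleteGamma (-k) (1 / α) / α ^ k := by
  have hy : 0 < 1 / α := by positivity
  have hsum : ∀ x ∈ Ioi (0 : ℝ), α / (1 + α * x) * erlangTail m x =
      ∑ k ∈ range (m + 1), (k ! : ℝ)⁻¹ * (x ^ k * exp (-x) / (x + 1 / α)) :=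
    fun x (hx : 0 < x) => by
      rw [erlangTail, mul_sum]
      refine sum_congr rfl fun k _ => ?_
      have : 0 < 1 + α * x := by positivity
      simp only [erlangDensity]
      field_simp
      ring
  rw [setIntegral_congr_fun measurableSet_Ioi hsum, integral_finsetSum _ fun k _ =>
    (integrableOn_pow_mul_exp_neg_div_add hy k).const_mul _, mul_sum]
  refine sum_congr rfl fun k _ => ?_
  rw [integral_const_mul, integral_pow_mul_exp_neg_div_add hy k, one_div, inv_pow]
  field_simp

end

/-- Closed form `R⁽¹⁾(α, M)`: for `α > 0` and `M ≥ 1`,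
`∫₀^∞ log₂(1 + α x) x^(M−1) e^(−x)/(M−1)! dx
  = log₂(e) e^(1/α) Σ_{k=0}^{M−1} Γ(−k, 1/α)/α^k`. -/
theorem stmt0 (α : ℝ) (hα : 0 < α) (M : ℕ) (hM : 0 < M) :
    ∫ x in Set.Ioi (0 : ℝ),
        Real.logb 2 (1 + α * x) * (x ^ (M - 1) * Real.exp (-x) / (Nat.factorial (M - 1))) =
      Real.logb 2 (Real.exp 1) * Real.exp (1 / α) *
        ∑ k ∈ Finset.range M, upperIncompleteGamma (-(k : ℝ)) (1 / α) / α ^ k := by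
  obtain ⟨m, rfl⟩ := Nat.exists_eq_add_one_of_ne_zero hM.ne'
  have hlogb : ∀ x, logb 2 (1 + α * x) * (x ^ (m + 1 - 1) * exp (-x) / (m + 1 - 1)!) =
      (log 2)⁻¹ * (log (1 + α * x) * erlangDensity m x) := fun x => by
    rw [logb, Nat.add_sub_cancel, erlangDensity]
    ring
  simp_rw [hlogb, integral_const_mul, integral_log_one_add_mul_mul_erlangDensity hα,
    integral_div_one_add_mul_mul_erlangTail hα, logb, log_exp]
  ring
end

section
/- (Lemma 3, sufficient condition for minimal training length.) Let N_t ≥ 2 be an integer, let N_B and T̄ be reals with 0 < N_B < T̄, and let L > 0 and P > 0 be reals. Set ψ = −γ + Σ_{l=1}^{N_t−2} 1/l (the digamma value ψ(N_t−1)), and define the effective throughput F(t) = (1 − t/T̄) · ln( L·P·e^ψ·T̄ / (√(T̄ − t) + 1)² ) for t ∈ [N_B, T̄). If ln(P·L) + ψ > √(T̄ − N_B)/(√(T̄ − N_B) + 1) + 2·ln(√(1 − N_B/T̄) + 1/√T̄), then F(N_B) > F(t) for every t ∈ (N_B, T̄); that is, the optimal training length is the minimum possible value T̄_t* = N_B.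 -/
open Real

/-!
Substituting `u = T̄ - t` gives `F t = g(T̄ - t) / T̄` with `g u = u (K - 2 ln(√u + 1))` and
`K = ln(L P e^ψ T̄)`. The derivative `g' u = K - 2 ln(√u + 1) - √u/(√u + 1)` is strictly
decreasing, and the hypothesis says exactly that it is positive at `u = T̄ - N_B`. Hence `g` is
strictly increasing on `[0, T̄ - N_B]`, so `F` is strictly decreasing on `[N_B, T̄]`.
-/

/-- The throughput `(T̄ - t) · ln(L P e^ψ T̄ / (√(T̄ - t) + 1)²)` as a function of `u = T̄ - t`,
with `K = ln(L P e^ψ T̄)`. -/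
noncomputable def dataGain (K u : ℝ) : ℝ := u * (K - 2 * log (√u + 1))

noncomputable def marginalGain (K u : ℝ) : ℝ := K - 2 * log (√u + 1) - √u / (√u + 1)

theorem hasDerivAt_dataGain (K : ℝ) {u : ℝ} (hu : 0 < u) :
    HasDerivAt (dataGain K) (marginalGain K u) u := by
  have hlog : HasDerivAt (fun x => log (√x + 1)) (1 / (2 * √u) / (√u + 1)) u :=
    ((hasDerivAt_sqrt hu.ne').add_const 1).log (by positivity)
  refine ((hasDerivAt_id' u).mul ((hlog.const_mul 2).const_sub K)).congr_deriv ?_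
  have hsq : √u * √u = u := mul_self_sqrt hu.le
  rw [marginalGain]
  field_simp
  linear_combination hsq

theorem marginalGain_lt_of_lt (K : ℝ) {u v : ℝ} (hu : 0 ≤ u) (huv : u < v) :
    marginalGain K v < marginalGain K u := by
  have hsqrt : √u < √v := sqrt_lt_sqrt hu huv
  have hpos : 0 < √u + 1 := by positivity
  have hlog : log (√u + 1) < log (√v + 1) := log_lt_log hpos (by linarith)
  have hfrac : √u / (√u + 1) < √v / (√v + 1) := by
    rw [div_lt_div_iff₀ hpos (by positivity)]
    linarith
  unfold marginalGain
  linarith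

theorem strictMonoOn_dataGain {K s : ℝ} (hs : 0 ≤ marginalGain K s) :
    StrictMonoOn (dataGain K) (Set.Icc 0 s) := by
  refine strictMonoOn_of_deriv_pos (convex_Icc 0 s) ?_ fun u hu => ?_
  · refine continuousOn_id.mul (continuousOn_const.sub (continuousOn_const.mul ?_))
    exact (continuous_sqrt.continuousOn.add continuousOn_const).log fun x _ =>
      (add_pos_of_nonneg_of_pos (sqrt_nonneg x) one_pos).ne'
  · rw [interior_Icc] at hu
    rw [(hasDerivAt_dataGain K hu.1).deriv]
    exact hs.trans_lt (marginalGain_lt_of_lt K hu.1.le hu.2)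

theorem stmt8_general (NB T L P : ℝ)
    (hNB : 0 < NB) (hT : NB < T) (hL : 0 < L) (hP : 0 < P)
    (ψ : ℝ)
    (F : ℝ → ℝ)
    (hF : ∀ t, F t = (1 - t / T) *
      Real.log (L * P * Real.exp ψ * T / (Real.sqrt (T - t) + 1) ^ 2))
    (hcond : Real.log (P * L) + ψ >
      Real.sqrt (T - NB) / (Real.sqrt (T - NB) + 1) +
        2 * Real.log (Real.sqrt (1 - NB / T) + 1 / Real.sqrt T)) :
    ∀ t, NB < t → t < T → F t < F NB := by
  intro t ht htT
  have hT0 : 0 < T := hNB.trans hT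
  have hlogA : log (L * P * exp ψ * T) = log (P * L) + ψ + log T := by
    rw [log_mul (by positivity) hT0.ne', log_mul (by positivity) (exp_pos ψ).ne', log_exp,
      mul_comm L P]
  have hF_eq : ∀ x, F x = dataGain (log (P * L) + ψ + log T) (T - x) / T := fun x => by
    rw [hF, log_div (by positivity) (by positivity), log_pow, hlogA, dataGain]
    field_simp
    push_cast
    ring
  have hroot : √(1 - NB / T) + 1 / √T = (√(T - NB) + 1) / √T := by
    rw [one_sub_div hT0.ne', sqrt_div (by linarith)]
    ring
  have hmarginal : 0 ≤ marginalGain (log (P * L) + ψ + log T) (T - NB) := by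
    rw [hroot, log_div (by positivity) (by positivity), log_sqrt hT0.le] at hcond
    unfold marginalGain
    linarith
  rw [hF_eq, hF_eq, div_lt_div_iff_of_pos_right hT0]
  exact strictMonoOn_dataGain hmarginal ⟨by linarith, by linarith⟩ ⟨by linarith, le_rfl⟩
    (by linarith)

/-- Lemma 3 (sufficient condition for minimal training length): let `N_t ≥ 2`,
`0 < N_B < T̄`, `L, P > 0`, `ψ = ψ(N_t−1) = −γ + Σ_{l=1}^{N_t−2} 1/l`, and
`F(t) = (1 − t/T̄) ln(L P e^ψ T̄/(√(T̄−t)+1)²)`.  If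
`ln(P L) + ψ > √(T̄−N_B)/(√(T̄−N_B)+1) + 2 ln(√(1−N_B/T̄) + 1/√T̄)`,
then `F(N_B) > F(t)` for all `t ∈ (N_B, T̄)`, i.e. the optimal training length
is the minimal value `N_B`. -/
theorem stmt8 (Nt : ℕ) (hNt : 2 ≤ Nt) (NB T L P : ℝ)
    (hNB : 0 < NB) (hT : NB < T) (hL : 0 < L) (hP : 0 < P)
    (ψ : ℝ)
    (hψ : ψ = -Real.eulerMascheroniConstant + ∑ l ∈ Finset.range (Nt - 2), 1 / ((l : ℝ) + 1))
    (F : ℝ → ℝ)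
    (hF : ∀ t, F t = (1 - t / T) *
      Real.log (L * P * Real.exp ψ * T / (Real.sqrt (T - t) + 1) ^ 2))
    (hcond : Real.log (P * L) + ψ >
      Real.sqrt (T - NB) / (Real.sqrt (T - NB) + 1) +
        2 * Real.log (Real.sqrt (1 - NB / T) + 1 / Real.sqrt T)) :
    ∀ t, NB < t → t < T → F t < F NB :=
  stmt8_general NB T L P hNB hT hL hP ψ F hF hcond
end

section
/- Let T̄ > 0 and set c = 1/√T̄. Let x₀ ∈ (0, 1) and let a be a real number with a > x₀/(x₀ + c) + 2·ln(x₀ + c). Then the function f(x) = a·x² − 2·x²·ln(x + c) has derivative f′(x) = 2·a·x − 2·x²/(x + c) − 4·x·ln(x + c) > 0 for every x ∈ (0, x₀]; consequently f is strictly increasing on (0, x₀] and attains its maximum over (0, x₀] uniquely at x₀. -/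
open Real Set

/-!
Writing `θ c x = x / (x + c) + 2 log (x + c)`, the derivative of `f x = a x² − 2 x² log (x + c)`
factors as `2 x (a − θ c x)`. For `c ≥ 0` both summands of `θ c` are monotone in `x`, so
`θ c x ≤ θ c x₀ < a` on `(0, x₀]`; hence `f' > 0` there and `f` is strictly increasing.
-/

theorem strictMonoOn_of_hasDerivAt_pos {D : Set ℝ} (hD : Convex ℝ D) {f f' : ℝ → ℝ}
    (hf : ∀ x ∈ D, HasDerivAt f (f' x) x) (hf' : ∀ x ∈ D, 0 < f' x) : StrictMonoOn f D :=
  strictMonoOn_of_hasDerivWithinAt_pos hD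
    (fun x hx => (hf x hx).continuousAt.continuousWithinAt)
    (fun x hx => (hf x (interior_subset hx)).hasDerivWithinAt)
    (fun x hx => hf' x (interior_subset hx))

noncomputable section

namespace Throughput

def f (a c x : ℝ) : ℝ := a * x ^ 2 - 2 * x ^ 2 * log (x + c)

def f' (a c x : ℝ) : ℝ := 2 * a * x - 2 * x ^ 2 / (x + c) - 4 * x * log (x + c)

def θ (c x : ℝ) : ℝ := x / (x + c) + 2 * log (x + c)

variable {a c x : ℝ}

theorem hasDerivAt_f (hx : x + c ≠ 0) : HasDerivAt (f a c) (f' a c x) x := by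
  have hlog : HasDerivAt (fun x => log (x + c)) (1 / (x + c)) x := by
    simpa using ((hasDerivAt_id x).add_const c).log hx
  have hsq : HasDerivAt (fun x : ℝ => x ^ 2) (2 * x) x := by
    simpa using hasDerivAt_pow 2 x
  refine ((hsq.const_mul a).sub ((hsq.const_mul 2).mul hlog)).congr_deriv ?_
  simp only [f']
  field_simp
  ring

theorem f'_eq (hx : x + c ≠ 0) : f' a c x = 2 * x * (a - θ c x) := by
  simp only [f', θ]
  field_simp
  ring

theorem monotoneOn_θ (hc : 0 ≤ c) : MonotoneOn (θ c) (Ioi (-c)) := by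
  intro x hx y hy hxy
  have hxc : 0 < x + c := neg_lt_iff_pos_add.mp hx
  have hyc : 0 < y + c := neg_lt_iff_pos_add.mp hy
  have hfrac : x / (x + c) ≤ y / (y + c) := by
    rw [div_le_div_iff₀ hxc hyc]
    nlinarith
  have hlog : log (x + c) ≤ log (y + c) := log_le_log hxc (by linarith)
  simp only [θ]
  linarith

theorem f'_pos {x₀ : ℝ} (hc : 0 ≤ c) (ha : θ c x₀ < a) (hx : x ∈ Ioc 0 x₀) : 0 < f' a c x := by
  obtain ⟨hx0, hxx₀⟩ := hx
  have hθ : θ c x ≤ θ c x₀ :=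
    monotoneOn_θ hc (show -c < x by linarith) (show -c < x₀ by linarith) hxx₀
  have hgap : 0 < a - θ c x := by linarith
  rw [f'_eq (by positivity)]
  positivity

end Throughput

end

theorem stmt9_general (T : ℝ) (c : ℝ) (hc : c = 1 / Real.sqrt T)
    (x₀ a : ℝ) (hx₀ : x₀ ∈ Set.Ioo (0 : ℝ) 1)
    (ha : a > x₀ / (x₀ + c) + 2 * Real.log (x₀ + c)) :
    (∀ x ∈ Set.Ioc (0 : ℝ) x₀,
      HasDerivAt (fun x : ℝ => a * x ^ 2 - 2 * x ^ 2 * Real.log (x + c))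
        (2 * a * x - 2 * x ^ 2 / (x + c) - 4 * x * Real.log (x + c)) x ∧
      0 < 2 * a * x - 2 * x ^ 2 / (x + c) - 4 * x * Real.log (x + c)) ∧
    StrictMonoOn (fun x : ℝ => a * x ^ 2 - 2 * x ^ 2 * Real.log (x + c))
      (Set.Ioc (0 : ℝ) x₀) ∧
    (∀ x ∈ Set.Ioc (0 : ℝ) x₀, x ≠ x₀ →
      a * x ^ 2 - 2 * x ^ 2 * Real.log (x + c) <
        a * x₀ ^ 2 - 2 * x₀ ^ 2 * Real.log (x₀ + c)) := by
  have hc₀ : 0 ≤ c := by rw [hc]; positivity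
  have hθ : Throughput.θ c x₀ < a := ha
  have hderiv (x : ℝ) (hx : x ∈ Ioc 0 x₀) :
      HasDerivAt (Throughput.f a c) (Throughput.f' a c x) x ∧ 0 < Throughput.f' a c x :=
    ⟨Throughput.hasDerivAt_f (add_pos_of_pos_of_nonneg hx.1 hc₀).ne',
      Throughput.f'_pos hc₀ hθ hx⟩
  have hmono : StrictMonoOn (Throughput.f a c) (Ioc 0 x₀) :=
    strictMonoOn_of_hasDerivAt_pos (convex_Ioc 0 x₀) (fun x hx => (hderiv x hx).1)
      (fun x hx => (hderiv x hx).2)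
  exact ⟨hderiv, hmono, fun x hx hne => hmono hx ⟨hx₀.1, le_rfl⟩ (hx.2.lt_of_ne hne)⟩

/-- Calculus core of Lemma 3: with `c = 1/√T̄`, `x₀ ∈ (0,1)` and
`a > x₀/(x₀+c) + 2 ln(x₀+c)`, the function `f(x) = a x² − 2 x² ln(x+c)` has
derivative `f′(x) = 2 a x − 2 x²/(x+c) − 4 x ln(x+c) > 0` on `(0, x₀]`,
hence is strictly increasing there and attains its maximum over `(0, x₀]`
uniquely at `x₀`. -/
theorem stmt9 (T : ℝ) (hT : 0 < T) (c : ℝ) (hc : c = 1 / Real.sqrt T)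
    (x₀ a : ℝ) (hx₀ : x₀ ∈ Set.Ioo (0 : ℝ) 1)
    (ha : a > x₀ / (x₀ + c) + 2 * Real.log (x₀ + c)) :
    (∀ x ∈ Set.Ioc (0 : ℝ) x₀,
      HasDerivAt (fun x : ℝ => a * x ^ 2 - 2 * x ^ 2 * Real.log (x + c))
        (2 * a * x - 2 * x ^ 2 / (x + c) - 4 * x * Real.log (x + c)) x ∧
      0 < 2 * a * x - 2 * x ^ 2 / (x + c) - 4 * x * Real.log (x + c)) ∧
    StrictMonoOn (fun x : ℝ => a * x ^ 2 - 2 * x ^ 2 * Real.log (x + c))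
      (Set.Ioc (0 : ℝ) x₀) ∧
    (∀ x ∈ Set.Ioc (0 : ℝ) x₀, x ≠ x₀ →
      a * x ^ 2 - 2 * x ^ 2 * Real.log (x + c) <
        a * x₀ ^ 2 - 2 * x₀ ^ 2 * Real.log (x₀ + c)) :=
  stmt9_general T c hc x₀ a hx₀ ha
end

section
/- For every real T̄ > 0 and every real A, the function t ↦ (1 − t/T̄) · ( A − 2·ln(√(T̄ − t) + 1) ) is strictly concave on the interval (0, T̄). -/
/-!
Writing `s = √(T - t)`, the derivative of `t ↦ (1 - t/T)(A - 2 log(√(T - t) + 1))` is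
`(2 log(s + 1) + s/(s + 1) - A) / T`, which is strictly increasing in `s`, hence strictly
decreasing in `t`.
-/

open Real Set

lemma strictMonoOn_two_mul_log_add_one_add_div :
    StrictMonoOn (fun s : ℝ => 2 * log (s + 1) + s / (s + 1)) (Ici 0) := by
  intro a (ha : 0 ≤ a) b _ hab
  have hlog : log (a + 1) < log (b + 1) := log_lt_log (by linarith) (by linarith)
  have hdiv : a / (a + 1) ≤ b / (b + 1) := by
    rw [div_le_div_iff₀ (by linarith) (by linarith)]
    linarith
  dsimp only
  linarith

lemma hasDerivAt_one_sub_div_mul_sub_two_mul_log_sqrt {T t : ℝ} (A : ℝ) (hT : T ≠ 0)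
    (ht : t < T) :
    HasDerivAt (fun t => (1 - t / T) * (A - 2 * log (√(T - t) + 1)))
      ((2 * log (√(T - t) + 1) + √(T - t) / (√(T - t) + 1) - A) / T) t := by
  have hu : 0 < T - t := sub_pos.2 ht
  have hs : 0 < √(T - t) := sqrt_pos.2 hu
  have hlin : HasDerivAt (fun t => 1 - t / T) (-(1 / T)) t :=
    ((hasDerivAt_id' t).div_const T).const_sub 1
  have hsqrt : HasDerivAt (fun t => √(T - t)) (-1 / (2 * √(T - t))) t :=
    ((hasDerivAt_id' t).const_sub T).sqrt hu.ne'
  have hlog := (hsqrt.add_const 1).log (by positivity)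
  refine (hlin.mul ((hlog.const_mul 2).const_sub A)).congr_deriv ?_
  have hss : √(T - t) ^ 2 = T - t := sq_sqrt hu.le
  field_simp
  linear_combination -hss

lemma strictConcaveOn_one_sub_div_mul_sub_two_mul_log_sqrt {T : ℝ} (hT : 0 < T) (A : ℝ) :
    StrictConcaveOn ℝ (Iio T) (fun t => (1 - t / T) * (A - 2 * log (√(T - t) + 1))) := by
  have hderiv := fun t (ht : t ∈ Iio T) =>
    hasDerivAt_one_sub_div_mul_sub_two_mul_log_sqrt A hT.ne' ht
  refine StrictAntiOn.strictConcaveOn_of_deriv (convex_Iio T)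
    (fun t ht => (hderiv t ht).continuousAt.continuousWithinAt) ?_
  rw [interior_Iio]
  intro x hx y hy hxy
  rw [(hderiv x hx).deriv, (hderiv y hy).deriv]
  have hsqrt : √(T - y) < √(T - x) := sqrt_lt_sqrt (sub_pos.2 hy).le (by linarith)
  have hφ := strictMonoOn_two_mul_log_add_one_add_div (sqrt_nonneg _) (sqrt_nonneg _) hsqrt
  exact div_lt_div_of_pos_right (by linarith) hT

/-- For `T̄ > 0` and any real `A`, the effective-throughput expression
`t ↦ (1 − t/T̄)(A − 2 ln(√(T̄−t) + 1))` is strictly concave on `(0, T̄)`. -/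
theorem stmt11 (T : ℝ) (hT : 0 < T) (A : ℝ) :
    StrictConcaveOn ℝ (Set.Ioo (0 : ℝ) T)
      (fun t : ℝ => (1 - t / T) * (A - 2 * Real.log (Real.sqrt (T - t) + 1))) :=
  (strictConcaveOn_one_sub_div_mul_sub_two_mul_log_sqrt hT A).subset Ioo_subset_Iio_self
    (convex_Ioo 0 T)
end

section
/- Let a₀ > 0 and X₀ ∈ (0, 1) be reals, and define f(x) = (1 − x)/(X₀/x + a₀) = x·(1 − x)/(X₀ + a₀·x) for x ∈ (0, 1). Then f is strictly concave on (0, 1), the point x* = √(X₀/a₀ + X₀²/a₀²) − X₀/a₀ lies in the open interval (0, 1), and x* is the unique maximizer of f on (0, 1). -/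
/-!
With `b = X₀ / a₀` and `u = x + b`, the objective equals `(1 + 2b − u − c/u) / a₀` where
`c = b + b²`. As `u ↦ c/u` is strictly convex for `c > 0`, the objective is strictly concave,
and by AM–GM `u + c/u ≥ 2√c` with equality only at `u = √c`, i.e. at `x = √(b + b²) − b`.
-/

open Real Set

theorem StrictConvexOn.const_mul {𝕜 E : Type*} [Field 𝕜] [LinearOrder 𝕜] [IsStrictOrderedRing 𝕜]
    [AddCommMonoid E] [Module 𝕜 E] {s : Set E} {f : E → 𝕜} {c : 𝕜}
    (hf : StrictConvexOn 𝕜 s f) (hc : 0 < c) : StrictConvexOn 𝕜 s fun x => c * f x :=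
  ⟨hf.1, fun x hx y hy hxy a b ha hb hab => by
    simpa only [smul_eq_mul, mul_add, mul_left_comm c] using
      mul_lt_mul_of_pos_left (hf.2 hx hy hxy ha hb hab) hc⟩

theorem strictConvexOn_div_add {b c : ℝ} (hc : 0 < c) :
    StrictConvexOn ℝ (Ioi (-b)) fun x => c / (x + b) := by
  have h := ((strictConvexOn_zpow (m := -1) (by decide) (by decide)).translate_left b).const_mul hc
  have hs : (fun z => b + z) ⁻¹' Ioi 0 = Ioi (-b) := by
    ext z; simp [neg_lt_iff_pos_add']
  rw [hs] at h
  refine h.congr fun x _ => ?_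
  simp [div_eq_mul_inv]

theorem concaveOn_const_sub_mul {s : Set ℝ} (hs : Convex ℝ s) (p q : ℝ) :
    ConcaveOn ℝ s fun x => p - q * x :=
  ⟨hs, fun x _ y _ μ ν _ _ h => le_of_eq <| by simp only [smul_eq_mul]; linear_combination p * h⟩

theorem strictConcaveOn_sub_sub_div_add {a b c : ℝ} (k : ℝ) (ha : 0 < a) (hc : 0 < c) :
    StrictConcaveOn ℝ (Ioi (-b)) fun x => (k - (x + b) - c / (x + b)) / a := by
  refine ((concaveOn_const_sub_mul (convex_Ioi _) ((k - b) / a) a⁻¹).sub_strictConvexOn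
    (strictConvexOn_div_add (b := b) (div_pos hc ha))).congr fun x hx => ?_
  have : x + b ≠ 0 := by rw [mem_Ioi] at hx; linarith
  simp only [Pi.sub_apply]
  field_simp
  ring

theorem two_mul_sqrt_lt_add_div {u c : ℝ} (hu : 0 < u) (hc : 0 ≤ c) (hne : u ≠ √c) :
    2 * √c < u + c / u := by
  have hsq : 0 < (u - √c) ^ 2 := by positivity [sub_ne_zero.2 hne]
  have : u + c / u - 2 * √c = (u - √c) ^ 2 / u := by
    field_simp
    rw [sub_sq, sq_sqrt hc]
    ring
  have := div_pos hsq hu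
  linarith

theorem sqrt_add_sq_sub_mem_Ioo {b : ℝ} (hb : 0 < b) : √(b + b ^ 2) - b ∈ Ioo 0 1 := by
  constructor
  · rw [sub_pos, lt_sqrt hb.le]; linarith
  · rw [sub_lt_iff_lt_add, sqrt_lt' (by linarith)]; nlinarith

theorem one_sub_div_mul_div_add_eq {a b x : ℝ} (ha : a ≠ 0) (hx : x ≠ 0) (hxb : x + b ≠ 0) :
    (1 - x) / (a * b / x + a) = (1 + 2 * b - (x + b) - (b + b ^ 2) / (x + b)) / a := by
  rw [div_add' _ _ _ hx, ← mul_add, add_comm]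
  field_simp
  ring

/-- Digital-feedback bit allocation: for `a₀ > 0` and `X₀ ∈ (0,1)`, the function
`f(x) = (1−x)/(X₀/x + a₀)` is strictly concave on `(0,1)`, the point
`x* = √(X₀/a₀ + X₀²/a₀²) − X₀/a₀` lies in `(0,1)`, and `x*` is the unique
maximizer of `f` on `(0,1)`. -/
theorem stmt15 (a₀ X₀ : ℝ) (ha₀ : 0 < a₀) (hX₀ : X₀ ∈ Set.Ioo (0 : ℝ) 1) :
    StrictConcaveOn ℝ (Set.Ioo (0 : ℝ) 1)
      (fun x : ℝ => (1 - x) / (X₀ / x + a₀)) ∧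
    (Real.sqrt (X₀ / a₀ + X₀ ^ 2 / a₀ ^ 2) - X₀ / a₀) ∈ Set.Ioo (0 : ℝ) 1 ∧
    (∀ x ∈ Set.Ioo (0 : ℝ) 1,
      x ≠ Real.sqrt (X₀ / a₀ + X₀ ^ 2 / a₀ ^ 2) - X₀ / a₀ →
      (1 - x) / (X₀ / x + a₀) <
        (1 - (Real.sqrt (X₀ / a₀ + X₀ ^ 2 / a₀ ^ 2) - X₀ / a₀)) /
          (X₀ / (Real.sqrt (X₀ / a₀ + X₀ ^ 2 / a₀ ^ 2) - X₀ / a₀) + a₀)) := by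
  obtain ⟨b, hb, rfl⟩ : ∃ b, 0 < b ∧ X₀ = a₀ * b :=
    ⟨X₀ / a₀, div_pos hX₀.1 ha₀, (mul_div_cancel₀ _ ha₀.ne').symm⟩
  rw [mul_pow, mul_div_cancel_left₀ _ (pow_ne_zero 2 ha₀.ne'), mul_div_cancel_left₀ _ ha₀.ne']
  have hpos : Ioo (0 : ℝ) 1 ⊆ Ioi (-b) := fun x hx => by simp only [mem_Ioi]; linarith [hx.1]
  have hf : EqOn (fun x => (1 - x) / (a₀ * b / x + a₀))
      (fun x => (1 + 2 * b - (x + b) - (b + b ^ 2) / (x + b)) / a₀) (Ioo 0 1) :=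
    fun x hx => one_sub_div_mul_div_add_eq ha₀.ne' hx.1.ne' (by linarith [hx.1])
  have hmem := sqrt_add_sq_sub_mem_Ioo hb
  refine ⟨((strictConcaveOn_sub_sub_div_add _ ha₀ (by positivity)).subset hpos
    (convex_Ioo 0 1)).congr hf.symm, hmem, fun x hx hne => ?_⟩
  refine (hf hx).trans_lt ((?_ : _ < _).trans_eq (hf hmem).symm)
  dsimp only
  rw [sub_add_cancel, div_sqrt, div_lt_div_iff_of_pos_right ha₀]
  have hamgm := two_mul_sqrt_lt_add_div (by linarith [hx.1] : 0 < x + b) (by positivity)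
    (fun h => hne (eq_sub_of_add_eq h))
  linarith
end

section
/- For every integer B ≥ 0 and every integer N_t ≥ 2, 2^B · Β(2^B, N_t/(N_t − 1)) ≤ 2^(−B/(N_t−1)), where Β(x, y) = Γ(x)·Γ(y)/Γ(x + y) is the Beta function. Equivalently, the expected squared quantization alignment under random vector quantization satisfies ξ = 1 − 2^B·Β(2^B, N_t/(N_t−1)) ≥ 1 − 2^(−B/(N_t−1)). -/
/-!
With `K = 2^B` and `δ = 1/(N_t-1) ∈ (0,1]` the claim reads `Γ(K+1) Γ(1+δ) K^δ ≤ Γ(K+1+δ)`.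
Log-convexity of `Γ` along `K+1 = δ(K+δ) + (1-δ)(K+δ+1)` gives Wendel's bound
`Γ(K+1) (K+δ)^δ ≤ Γ(K+1+δ)`, and convexity of `Γ` on `[1,2]` gives `Γ(1+δ) ≤ 1`.
-/

open Real

namespace Real

theorem Gamma_one_add_le_one {δ : ℝ} (hδ0 : 0 ≤ δ) (hδ1 : δ ≤ 1) : Gamma (1 + δ) ≤ 1 := by
  have hmem : 1 + δ ∈ segment ℝ (1 : ℝ) 2 := by
    rw [segment_eq_Icc (by norm_num)]
    constructor <;> linarith
  simpa [Gamma_two] using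
    convexOn_Gamma.le_max_of_mem_segment (by norm_num) (by norm_num) hmem

theorem Gamma_add_one_mul_rpow_le {x δ : ℝ} (hxδ : 0 < x + δ) (hδ0 : 0 < δ) (hδ1 : δ ≤ 1) :
    Gamma (x + 1) * (x + δ) ^ δ ≤ Gamma (x + 1 + δ) := by
  have hrec : Gamma (x + 1 + δ) = (x + δ) * Gamma (x + δ) := by
    rw [← Gamma_add_one hxδ.ne']; ring_nf
  rcases hδ1.lt_or_eq with hδ1 | rfl
  · have hΓ : 0 < Gamma (x + δ) := Gamma_pos_of_pos hxδ
    have hconv := Gamma_mul_add_mul_le_rpow_Gamma_mul_rpow_Gamma hxδ (by linarith : 0 < x + δ + 1)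
      hδ0 (sub_pos.2 hδ1) (add_sub_cancel δ 1)
    have hpt : δ * (x + δ) + (1 - δ) * (x + δ + 1) = x + 1 := by ring
    -- `Γ(x+δ)^δ Γ(x+δ+1)^(1-δ) = Γ(x+δ) (x+δ)^(1-δ) = Γ(x+1+δ) (x+δ)^(-δ)`
    have hrhs : Gamma (x + δ) ^ δ * Gamma (x + δ + 1) ^ (1 - δ)
        = Gamma (x + 1 + δ) * ((x + δ) ^ δ)⁻¹ := by
      rw [Gamma_add_one hxδ.ne', mul_rpow hxδ.le hΓ.le, rpow_sub hxδ, rpow_sub hΓ, rpow_one,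
        rpow_one, hrec]
      field_simp
    rw [hpt, hrhs] at hconv
    rwa [← le_div_iff₀ (rpow_pos_of_pos hxδ δ), div_eq_mul_inv]
  · rw [rpow_one, hrec, mul_comm]

theorem mul_Gamma_mul_Gamma_div_le_rpow_neg {x δ : ℝ} (hx : 0 < x) (hδ0 : 0 < δ)
    (hδ1 : δ ≤ 1) : x * (Gamma x * Gamma (1 + δ) / Gamma (x + (1 + δ))) ≤ x ^ (-δ) := by
  have hΓx1 : 0 < Gamma (x + 1) := Gamma_pos_of_pos (by linarith)
  have hxδ : 0 < x ^ δ := rpow_pos_of_pos hx δ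
  have key : Gamma (x + 1) * Gamma (1 + δ) * x ^ δ ≤ Gamma (x + 1 + δ) :=
    calc Gamma (x + 1) * Gamma (1 + δ) * x ^ δ
        ≤ Gamma (x + 1) * 1 * (x + δ) ^ δ := by
          gcongr
          · exact Gamma_one_add_le_one hδ0.le hδ1
          · linarith
      _ ≤ Gamma (x + 1 + δ) := by
          simpa using Gamma_add_one_mul_rpow_le (by linarith) hδ0 hδ1
  rw [← mul_div_assoc, ← mul_assoc, ← Gamma_add_one hx.ne', ← add_assoc,
    div_le_iff₀ (Gamma_pos_of_pos (by linarith)), rpow_neg hx.le, inv_mul_eq_div,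
    le_div_iff₀ hxδ]
  exact key

end Real

/-- RVQ quantization-error bound: for every integer `B ≥ 0` and every integer
`N_t ≥ 2`, `2^B Β(2^B, N_t/(N_t−1)) ≤ 2^(−B/(N_t−1))`, where
`Β(x, y) = Γ(x)Γ(y)/Γ(x+y)`; equivalently, the RVQ expected squared alignment
satisfies `ξ = 1 − 2^B Β(2^B, N_t/(N_t−1)) ≥ 1 − 2^(−B/(N_t−1))`. -/
theorem stmt16 (B Nt : ℕ) (hNt : 2 ≤ Nt) :
    (2 : ℝ) ^ B *
        (Real.Gamma ((2 : ℝ) ^ B) * Real.Gamma ((Nt : ℝ) / ((Nt : ℝ) - 1)) /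
          Real.Gamma ((2 : ℝ) ^ B + (Nt : ℝ) / ((Nt : ℝ) - 1))) ≤
      (2 : ℝ) ^ (-(B : ℝ) / ((Nt : ℝ) - 1)) := by
  have hNt1 : (1 : ℝ) ≤ (Nt : ℝ) - 1 := by
    have : (2 : ℝ) ≤ Nt := by exact_mod_cast hNt
    linarith
  have hexp : (Nt : ℝ) / ((Nt : ℝ) - 1) = 1 + 1 / ((Nt : ℝ) - 1) := by
    field_simp; ring
  have hrhs : (2 : ℝ) ^ (-(B : ℝ) / ((Nt : ℝ) - 1)) = ((2 : ℝ) ^ B) ^ (-(1 / ((Nt : ℝ) - 1))) := by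
    rw [← rpow_natCast, ← rpow_mul (by norm_num)]
    ring_nf
  rw [hexp, hrhs]
  exact mul_Gamma_mul_Gamma_div_le_rpow_neg (by positivity) (by positivity)
    ((div_le_one (by linarith)).2 hNt1)
end
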